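/- For vectors in ℝ³ (or functions valued in ℝ³), the map f(u) = |u|^{r-1} u with r ≥ 1 satisfies the monotonicity lower bound: there exists a constant C(r) > 0 such that (f(a) - f(b)) · (a - b) ≥ C(r) |a - b|^{r+1} for all a, b ∈ ℝ³. -/

import Mathlib

open scoped RealInnerProductSpace

/-!
With `s = r - 1 ≥ 0`, polarisation gives
`⟪‖a‖^s • a - ‖b‖^s • b, a - b⟫ = (‖a‖^s + ‖b‖^s) ‖a - b‖² / 2 + (‖a‖^s - ‖b‖^s)(‖a‖² - ‖b‖²) / 2`,
and the second term is nonnegative since `t ↦ t^s` and `t ↦ t²` are both monotone on `[0, ∞)`.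
By the triangle inequality `‖a - b‖^s ≤ 2^s (‖a‖^s + ‖b‖^s)`, so the inner product is at least
`2^(-r) ‖a - b‖^(s + 2)`.
-/

namespace Real

lemma add_rpow_le_two_rpow_mul_rpow_add_rpow {p x y : ℝ} (hx : 0 ≤ x) (hy : 0 ≤ y)
    (hp : 0 ≤ p) : (x + y) ^ p ≤ 2 ^ p * (x ^ p + y ^ p) := calc
  (x + y) ^ p ≤ (2 * max x y) ^ p := by
    rw [two_mul]; gcongr <;> simp
  _ = 2 ^ p * max x y ^ p := mul_rpow zero_le_two (hx.trans (le_max_left x y))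
  _ = 2 ^ p * max (x ^ p) (y ^ p) := by rw [rpow_max hx hy hp]
  _ ≤ 2 ^ p * (x ^ p + y ^ p) := by
    gcongr; exact max_le_add_of_nonneg (rpow_nonneg hx p) (rpow_nonneg hy p)

end Real

lemma norm_sub_rpow_le_two_rpow_mul {G : Type*} [SeminormedAddGroup G] {s : ℝ} (hs : 0 ≤ s)
    (a b : G) :
    ‖a - b‖ ^ s ≤ 2 ^ s * (‖a‖ ^ s + ‖b‖ ^ s) :=
  (Real.rpow_le_rpow (norm_nonneg _) (norm_sub_le a b) hs).trans
    (Real.add_rpow_le_two_rpow_mul_rpow_add_rpow (norm_nonneg a) (norm_nonneg b) hs)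

section InnerProductSpace

variable {E : Type*} [NormedAddCommGroup E] [InnerProductSpace ℝ E]

lemma real_inner_smul_sub_smul_sub (α β : ℝ) (a b : E) :
    ⟪α • a - β • b, a - b⟫ =
      (α + β) / 2 * ‖a - b‖ ^ 2 + (α - β) * (‖a‖ ^ 2 - ‖b‖ ^ 2) / 2 := by
  rw [norm_sub_sq_real]
  simp only [inner_sub_left, inner_sub_right, real_inner_smul_left,
    real_inner_self_eq_norm_sq, real_inner_comm a b]
  ring

lemma half_rpow_add_mul_norm_sub_sq_le_inner {s : ℝ} (hs : 0 ≤ s) (a b : E) :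
    (‖a‖ ^ s + ‖b‖ ^ s) / 2 * ‖a - b‖ ^ 2 ≤ ⟪‖a‖ ^ s • a - ‖b‖ ^ s • b, a - b⟫ := by
  rw [real_inner_smul_sub_smul_sub]
  have hmono : 0 ≤ (‖a‖ ^ s - ‖b‖ ^ s) * (‖a‖ ^ 2 - ‖b‖ ^ 2) := by
    rcases le_total ‖a‖ ‖b‖ with h | h
    · exact mul_nonneg_of_nonpos_of_nonpos
        (sub_nonpos.2 (by gcongr)) (sub_nonpos.2 (by gcongr))
    · exact mul_nonneg (sub_nonneg.2 (by gcongr)) (sub_nonneg.2 (by gcongr))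
  linarith

theorem two_rpow_neg_mul_norm_sub_rpow_le_inner {r : ℝ} (hr : 1 ≤ r) (a b : E) :
    2 ^ (-r) * ‖a - b‖ ^ (r + 1) ≤ ⟪‖a‖ ^ (r - 1) • a - ‖b‖ ^ (r - 1) • b, a - b⟫ := by
  have hs : 0 ≤ r - 1 := sub_nonneg.2 hr
  have hsplit : ‖a - b‖ ^ (r + 1) = ‖a - b‖ ^ (r - 1) * ‖a - b‖ ^ 2 := by
    rw [← Real.rpow_two, ← Real.rpow_add' (norm_nonneg _) (by linarith)]
    ring_nf
  have hconst : (2 : ℝ) ^ (-r) * 2 ^ (r - 1) = 1 / 2 := by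
    rw [← Real.rpow_add two_pos, show -r + (r - 1) = -1 by ring, Real.rpow_neg_one, one_div]
  calc 2 ^ (-r) * ‖a - b‖ ^ (r + 1)
      = 2 ^ (-r) * ‖a - b‖ ^ (r - 1) * ‖a - b‖ ^ 2 := by rw [hsplit, mul_assoc]
    _ ≤ 2 ^ (-r) * (2 ^ (r - 1) * (‖a‖ ^ (r - 1) + ‖b‖ ^ (r - 1))) * ‖a - b‖ ^ 2 := by
      gcongr; exact norm_sub_rpow_le_two_rpow_mul hs a b
    _ = (‖a‖ ^ (r - 1) + ‖b‖ ^ (r - 1)) / 2 * ‖a - b‖ ^ 2 := by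
      rw [← mul_assoc, hconst]; ring
    _ ≤ _ := half_rpow_add_mul_norm_sub_sq_le_inner hs a b

end InnerProductSpace

/-- Monotonicity lower bound for the damping nonlinearity `f(u) = |u|^{r-1} u` on `ℝ³`. -/
theorem damping_monotonicity (r : ℝ) (hr : 1 ≤ r) :
    ∃ C : ℝ, 0 < C ∧
      ∀ a b : EuclideanSpace ℝ (Fin 3),
        C * ‖a - b‖ ^ (r + 1) ≤
          ⟪(‖a‖ ^ (r - 1)) • a - (‖b‖ ^ (r - 1)) • b, a - b⟫ :=
  ⟨2 ^ (-r), Real.rpow_pos_of_pos two_pos _, two_rpow_neg_mul_norm_sub_rpow_le_inner hr⟩
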